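/- If sequences are drawn i.i.d. from a distribution P on a finite alphabet 𝒳, then the probability of the type class Λ_λ of a type λ satisfies (n+1)^{-|𝒳|} · 2^{-n D(λ‖P)} ≤ P^n(Λ_λ) ≤ 2^{-n D(λ‖P)}, where D is the KL divergence in base 2, assuming the support of λ is contained in the support of P. -/

import Mathlib

open Finset Real

noncomputable def klDiv {X : Type} [Fintype X] (p q : X → ℝ) : ℝ :=
  ∑ x, p x * Real.logb 2 (p x / q x)

/-! ### Auxiliary factorial inequalities -/

lemma fact_le_mul_pow (l : ℕ) : ∀ d : ℕ, (l + d).factorial ≤ l.factorial * (l + d) ^ d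
  | 0 => by simp
  | d + 1 => by
    have h1 : (l + (d + 1)).factorial = (l + d + 1) * (l + d).factorial := by
      rw [← Nat.add_assoc]; exact Nat.factorial_succ _
    rw [h1]
    calc (l + d + 1) * (l + d).factorial
        ≤ (l + d + 1) * (l.factorial * (l + d) ^ d) :=
          Nat.mul_le_mul_left _ (fact_le_mul_pow l d)
      _ ≤ (l + d + 1) * (l.factorial * (l + d + 1) ^ d) :=
          Nat.mul_le_mul_left _ (Nat.mul_le_mul_left _ (Nat.pow_le_pow_left (Nat.le_succ _) _))
      _ = l.factorial * (l + (d + 1)) ^ (d + 1) := by ring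

lemma fact_ptwise (a b : ℕ) : a.factorial * a ^ b ≤ b.factorial * a ^ a := by
  rcases le_total a b with h | h
  · have h1 : a.factorial * a ^ (b - a) ≤ b.factorial :=
      Nat.factorial_mul_pow_sub_le_factorial h
    calc a.factorial * a ^ b = (a.factorial * a ^ (b - a)) * a ^ a := by
          rw [mul_assoc, ← pow_add]
          congr 2
          omega
      _ ≤ b.factorial * a ^ a := Nat.mul_le_mul_right _ h1
  · have h1 : a.factorial ≤ b.factorial * a ^ (a - b) := by
      have := fact_le_mul_pow b (a - b)
      rwa [Nat.add_sub_cancel' h] at this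
    calc a.factorial * a ^ b ≤ (b.factorial * a ^ (a - b)) * a ^ b :=
          Nat.mul_le_mul_right _ h1
      _ = b.factorial * a ^ a := by
          rw [mul_assoc, ← pow_add]
          congr 2
          omega

lemma key_nat {X : Type} [Fintype X] (k k' : X → ℕ) (hs : ∑ x, k' x = ∑ x, k x) :
    Nat.multinomial Finset.univ k' * ∏ x, k x ^ k' x
      ≤ Nat.multinomial Finset.univ k * ∏ x, k x ^ k x := by
  have hpt : ∏ x, ((k x).factorial * k x ^ k' x) ≤ ∏ x, ((k' x).factorial * k x ^ k x) :=
    Finset.prod_le_prod' fun x _ => fact_ptwise (k x) (k' x)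
  have hF : 0 < (∏ x, (k x).factorial) * ∏ x, (k' x).factorial := by positivity
  refine Nat.le_of_mul_le_mul_right ?_ hF
  calc (Nat.multinomial Finset.univ k' * ∏ x, k x ^ k' x) *
        ((∏ x, (k x).factorial) * ∏ x, (k' x).factorial)
      = ((∏ x, (k' x).factorial) * Nat.multinomial Finset.univ k') *
          ∏ x, ((k x).factorial * k x ^ k' x) := by
        rw [Finset.prod_mul_distrib]; ring
    _ = (∑ x, k x).factorial * ∏ x, ((k x).factorial * k x ^ k' x) := by
        rw [Nat.multinomial_spec, hs]
    _ ≤ (∑ x, k x).factorial * ∏ x, ((k' x).factorial * k x ^ k x) :=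
        Nat.mul_le_mul_left _ hpt
    _ = ((∏ x, (k x).factorial) * Nat.multinomial Finset.univ k) *
          ∏ x, ((k' x).factorial * k x ^ k x) := by rw [Nat.multinomial_spec]
    _ = (Nat.multinomial Finset.univ k * ∏ x, k x ^ k x) *
          ((∏ x, (k x).factorial) * ∏ x, (k' x).factorial) := by
        rw [Finset.prod_mul_distrib]; ring

/-! ### Counting sequences by type -/

section Counting

variable {X : Type} [Fintype X] [DecidableEq X]

def cnt (n : ℕ) (xs : Fin n → X) : X → ℕ :=
  fun x => (Finset.univ.filter fun i => xs i = x).card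

lemma cnt_mem (n : ℕ) (xs : Fin n → X) :
    cnt n xs ∈ Finset.piAntidiag (Finset.univ : Finset X) n := by
  rw [Finset.mem_piAntidiag]
  refine ⟨?_, fun x _ => Finset.mem_univ x⟩
  have := Finset.card_eq_sum_card_fiberwise
    (f := xs) (s := Finset.univ) (t := Finset.univ) (fun i _ => Finset.mem_univ _)
  show ∑ x, cnt n xs x = n
  simpa [cnt] using this.symm

lemma prod_cnt {R : Type*} [CommMonoid R] (n : ℕ) (f : X → R) (xs : Fin n → X) :
    ∏ i, f (xs i) = ∏ x, f x ^ cnt n xs x := by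
  rw [← Finset.prod_fiberwise_of_maps_to (g := xs)
    (fun i (_ : i ∈ Finset.univ) => Finset.mem_univ (xs i)) (fun i => f (xs i))]
  refine Finset.prod_congr rfl fun x _ => ?_
  rw [cnt, ← Finset.prod_const]
  exact Finset.prod_congr rfl fun i hi => by rw [(Finset.mem_filter.1 hi).2]

lemma sum_prod_group {R : Type*} [CommSemiring R] (n : ℕ) (f : X → R) :
    ∑ xs : Fin n → X, ∏ i, f (xs i)
      = ∑ k' ∈ Finset.piAntidiag (Finset.univ : Finset X) n,
          ((Finset.univ.filter fun xs : Fin n → X => cnt n xs = k').card : R) *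
            ∏ x, f x ^ k' x := by
  rw [← Finset.sum_fiberwise_of_maps_to (g := cnt n)
    (fun xs (_ : xs ∈ Finset.univ) => cnt_mem n xs) (fun xs => ∏ i, f (xs i))]
  refine Finset.sum_congr rfl fun k' _ => ?_
  have h : ∀ xs ∈ Finset.univ.filter (fun xs : Fin n → X => cnt n xs = k'),
      ∏ i, f (xs i) = ∏ x, f x ^ k' x := fun xs hxs => by
    rw [prod_cnt, (Finset.mem_filter.1 hxs).2]
  rw [Finset.sum_congr rfl h, Finset.sum_const, nsmul_eq_mul]

lemma card_eq_multinomial (n : ℕ) (k : X → ℕ)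
    (hk : k ∈ Finset.piAntidiag (Finset.univ : Finset X) n) :
    (Finset.univ.filter fun xs : Fin n → X => cnt n xs = k).card
      = Nat.multinomial Finset.univ k := by
  classical
  have hmono : ∀ k' : X → ℕ, ∏ x, (MvPolynomial.X x : MvPolynomial X ℕ) ^ k' x
      = MvPolynomial.monomial (Finsupp.equivFunOnFinite.symm k') 1 := fun k' => by
    rw [← MvPolynomial.prod_X_pow_eq_monomial]
    exact (Finset.prod_subset (Finset.subset_univ _) fun x _ hx => by
      rw [show k' x = 0 from Finsupp.notMem_support_iff.1 hx, pow_zero]).symm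
  have hterm : ∀ (c : ℕ) (k' : X → ℕ),
      (c : MvPolynomial X ℕ) * ∏ x, MvPolynomial.X x ^ k' x
        = MvPolynomial.monomial (Finsupp.equivFunOnFinite.symm k') c := fun c k' => by
    rw [hmono, ← eq_natCast MvPolynomial.C c, MvPolynomial.C_mul_monomial, mul_one]
  have h3 : ∑ xs : Fin n → X, ∏ i, (MvPolynomial.X (xs i) : MvPolynomial X ℕ)
      = (∑ x, (MvPolynomial.X x : MvPolynomial X ℕ)) ^ n := by
    rw [← Fintype.piFinset_univ, ← Finset.prod_univ_sum]
    simp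
  have H : ∑ k' ∈ Finset.piAntidiag (Finset.univ : Finset X) n,
        MvPolynomial.monomial (Finsupp.equivFunOnFinite.symm k')
          ((Finset.univ.filter fun xs : Fin n → X => cnt n xs = k').card)
      = ∑ k' ∈ Finset.piAntidiag (Finset.univ : Finset X) n,
        MvPolynomial.monomial (Finsupp.equivFunOnFinite.symm k')
          (Nat.multinomial Finset.univ k') := by
    have h1 := sum_prod_group (R := MvPolynomial X ℕ) n MvPolynomial.X
    have h2 := Finset.sum_pow_eq_sum_piAntidiag (Finset.univ : Finset X)
      (MvPolynomial.X : X → MvPolynomial X ℕ) n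
    calc _ = ∑ k' ∈ Finset.piAntidiag (Finset.univ : Finset X) n,
          ((Finset.univ.filter fun xs : Fin n → X => cnt n xs = k').card : MvPolynomial X ℕ) *
            ∏ x, MvPolynomial.X x ^ k' x :=
          Finset.sum_congr rfl fun k' _ => (hterm _ k').symm
      _ = (∑ x, (MvPolynomial.X x : MvPolynomial X ℕ)) ^ n := by rw [← h1, h3]
      _ = ∑ k' ∈ Finset.piAntidiag (Finset.univ : Finset X) n,
          (Nat.multinomial Finset.univ k' : MvPolynomial X ℕ) *
            ∏ x, MvPolynomial.X x ^ k' x := h2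
      _ = _ := Finset.sum_congr rfl fun k' _ => hterm _ k'
  have hco := congrArg (MvPolynomial.coeff (Finsupp.equivFunOnFinite.symm k)) H
  rw [MvPolynomial.coeff_sum, MvPolynomial.coeff_sum] at hco
  simp only [MvPolynomial.coeff_monomial] at hco
  have hpick : ∀ c : (X → ℕ) → ℕ,
      (∑ k' ∈ Finset.piAntidiag (Finset.univ : Finset X) n,
        if Finsupp.equivFunOnFinite.symm k' = Finsupp.equivFunOnFinite.symm k
          then c k' else 0) = c k := fun c => by
    rw [Finset.sum_eq_single_of_mem k hk]
    · simp
    · intro b _ hb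
      exact if_neg fun h => hb (Finsupp.equivFunOnFinite.symm.injective h)
  rw [hpick, hpick] at hco
  exact hco

end Counting

/-! ### Main result -/

theorem bounds_aux {X : Type} [Fintype X] [DecidableEq X] {n : ℕ} (hn : 0 < n)
    (P : X → ℝ) (hP0 : ∀ x, 0 ≤ P x) (hP1 : ∑ x, P x = 1)
    (k : X → ℕ) (hk : ∑ x, k x = n)
    (hsupp : ∀ x, k x ≠ 0 → P x ≠ 0) :
    ((n : ℝ) + 1) ^ (-(Fintype.card X : ℝ)) *
        (2 : ℝ) ^ (-(n : ℝ) * klDiv (fun x => (k x : ℝ) / n) P)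
      ≤ (∑ xs : Fin n → X,
          (if ∀ x, (Finset.univ.filter fun i => xs i = x).card = k x
            then ∏ i, P (xs i) else 0)) ∧
    (∑ xs : Fin n → X,
        (if ∀ x, (Finset.univ.filter fun i => xs i = x).card = k x
          then ∏ i, P (xs i) else 0))
      ≤ (2 : ℝ) ^ (-(n : ℝ) * klDiv (fun x => (k x : ℝ) / n) P) := by
  classical
  set lam : X → ℝ := fun x => (k x : ℝ) / n with hlam
  have hn' : (0 : ℝ) < n := by exact_mod_cast hn
  have hkmem : k ∈ Finset.piAntidiag (Finset.univ : Finset X) n :=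
    Finset.mem_piAntidiag.2 ⟨hk, fun x _ => Finset.mem_univ x⟩
  set M : ℝ := (Nat.multinomial Finset.univ k : ℝ) with hM
  set A : ℝ := ∏ x, P x ^ k x with hA
  set B : ℝ := ∏ x, lam x ^ k x with hB
  have hApos : 0 < A := by
    refine Finset.prod_pos fun x _ => ?_
    rcases Nat.eq_zero_or_pos (k x) with h | h
    · rw [h, pow_zero]; exact one_pos
    · exact pow_pos (lt_of_le_of_ne (hP0 x) (Ne.symm (hsupp x h.ne'))) _
  have hBpos : 0 < B := by
    refine Finset.prod_pos fun x _ => ?_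
    rcases Nat.eq_zero_or_pos (k x) with h | h
    · rw [h, pow_zero]; exact one_pos
    · exact pow_pos (div_pos (by exact_mod_cast h) hn') _
  -- identify prob
  have hprob : (∑ xs : Fin n → X,
      (if ∀ x, (Finset.univ.filter fun i => xs i = x).card = k x
        then ∏ i, P (xs i) else 0)) = M * A := by
    have h0 : (∑ xs : Fin n → X,
        (if ∀ x, (Finset.univ.filter fun i => xs i = x).card = k x
          then ∏ i, P (xs i) else 0))
        = ∑ xs ∈ Finset.univ.filter fun xs : Fin n → X => cnt n xs = k,
            ∏ i, P (xs i) := by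
      rw [Finset.sum_filter]
      exact Finset.sum_congr rfl fun xs _ =>
        if_congr (by simp [cnt, funext_iff]) rfl rfl
    rw [h0]
    have h : ∀ xs ∈ Finset.univ.filter (fun xs : Fin n → X => cnt n xs = k),
        ∏ i, P (xs i) = A := fun xs hxs => by
      rw [prod_cnt, (Finset.mem_filter.1 hxs).2]
    rw [Finset.sum_congr rfl h, Finset.sum_const, nsmul_eq_mul,
      card_eq_multinomial n k hkmem]
  -- sum of lam is 1
  have hlam1 : ∑ x, lam x = 1 := by
    simp only [hlam]
    rw [← Finset.sum_div]
    rw [show ∑ x, ((k x : ℝ)) = (n : ℝ) by exact_mod_cast congrArg Nat.cast hk]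
    field_simp
  -- central identity
  have hcentral : (1 : ℝ) = ∑ k' ∈ Finset.piAntidiag (Finset.univ : Finset X) n,
      (Nat.multinomial Finset.univ k' : ℝ) * ∏ x, lam x ^ k' x := by
    have := Finset.sum_pow_eq_sum_piAntidiag (Finset.univ : Finset X) lam n
    rw [hlam1, one_pow] at this
    exact this
  have hlamnn : ∀ x, 0 ≤ lam x := fun x => by simp only [hlam]; positivity
  have hMpos : 0 < M := by
    rw [hM]; exact_mod_cast Nat.multinomial_pos _ _
  -- upper core : M * B ≤ 1
  have Tle : M * B ≤ 1 := by
    rw [hcentral]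
    exact Finset.single_le_sum (f := fun k' => (Nat.multinomial Finset.univ k' : ℝ) *
      ∏ x, lam x ^ k' x) (fun k' _ => mul_nonneg (Nat.cast_nonneg _)
        (Finset.prod_nonneg fun x _ => pow_nonneg (hlamnn x) _)) hkmem
  -- per-type maximality
  have hmax : ∀ k' ∈ Finset.piAntidiag (Finset.univ : Finset X) n,
      (Nat.multinomial Finset.univ k' : ℝ) * ∏ x, lam x ^ k' x ≤ M * B := by
    intro k' hk'
    have hsum' : ∑ x, k' x = n := (Finset.mem_piAntidiag.1 hk').1
    have hexp : ∀ (g : X → ℕ), ∑ x, g x = n →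
        ∏ x, lam x ^ g x = (∏ x, ((k x : ℝ)) ^ g x) / (n : ℝ) ^ n := by
      intro g hg
      simp only [hlam]
      simp only [div_pow]
      rw [Finset.prod_div_distrib, Finset.prod_pow_eq_pow_sum, hg]
    rw [hexp k' hsum', hM, hB, hexp k hk]
    have hpos : (0 : ℝ) < (n : ℝ) ^ n := by positivity
    rw [← mul_div_assoc, ← mul_div_assoc, div_le_div_iff₀ hpos hpos]
    refine mul_le_mul_of_nonneg_right ?_ (le_of_lt hpos)
    have := key_nat (X := X) k k' (hsum'.trans hk.symm)
    calc (Nat.multinomial Finset.univ k' : ℝ) * ∏ x, ((k x : ℝ)) ^ k' x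
        = ((Nat.multinomial Finset.univ k' * ∏ x, k x ^ k' x : ℕ) : ℝ) := by push_cast; ring
      _ ≤ ((Nat.multinomial Finset.univ k * ∏ x, k x ^ k x : ℕ) : ℝ) := by exact_mod_cast this
      _ = (Nat.multinomial Finset.univ k : ℝ) * ∏ x, ((k x : ℝ)) ^ k x := by push_cast; ring
  -- number of types
  have hcard : ((Finset.piAntidiag (Finset.univ : Finset X) n).card : ℝ)
      ≤ ((n : ℝ) + 1) ^ Fintype.card X := by
    have hsub : Finset.piAntidiag (Finset.univ : Finset X) n
        ⊆ Fintype.piFinset fun _ : X => Finset.range (n + 1) := by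
      intro k' hk'
      rw [Finset.mem_piAntidiag] at hk'
      rw [Fintype.mem_piFinset]
      intro x
      rw [Finset.mem_range]
      have : k' x ≤ n := hk'.1 ▸
        Finset.single_le_sum (f := k') (fun _ _ => Nat.zero_le _) (Finset.mem_univ x)
      omega
    have h1 : (Finset.piAntidiag (Finset.univ : Finset X) n).card ≤ (n + 1) ^ Fintype.card X := by
      calc (Finset.piAntidiag (Finset.univ : Finset X) n).card
          ≤ (Fintype.piFinset fun _ : X => Finset.range (n + 1)).card :=
            Finset.card_le_card hsub
        _ = (n + 1) ^ Fintype.card X := by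
            rw [Fintype.card_piFinset]
            simp [Finset.prod_const]
    calc ((Finset.piAntidiag (Finset.univ : Finset X) n).card : ℝ)
        ≤ (((n + 1) ^ Fintype.card X : ℕ) : ℝ) := by exact_mod_cast h1
      _ = ((n : ℝ) + 1) ^ Fintype.card X := by push_cast; ring
  -- lower core : 1 ≤ (n+1)^|X| * (M*B)
  have Tge : (1 : ℝ) ≤ ((n : ℝ) + 1) ^ Fintype.card X * (M * B) := by
    have hMB : 0 ≤ M * B := le_of_lt (mul_pos hMpos hBpos)
    calc (1 : ℝ) = ∑ k' ∈ Finset.piAntidiag (Finset.univ : Finset X) n,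
          (Nat.multinomial Finset.univ k' : ℝ) * ∏ x, lam x ^ k' x := hcentral
      _ ≤ ∑ _k' ∈ Finset.piAntidiag (Finset.univ : Finset X) n, M * B :=
          Finset.sum_le_sum hmax
      _ = ((Finset.piAntidiag (Finset.univ : Finset X) n).card : ℝ) * (M * B) := by
          rw [Finset.sum_const, nsmul_eq_mul]
      _ ≤ ((n : ℝ) + 1) ^ Fintype.card X * (M * B) :=
          mul_le_mul_of_nonneg_right hcard hMB
  -- identify 2 ^ (-n D)
  have hD : (2 : ℝ) ^ (-(n : ℝ) * klDiv lam P) = A / B := by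
    have hsum : -(n : ℝ) * klDiv lam P = ∑ x, (k x : ℝ) * Real.logb 2 (P x / lam x) := by
      simp only [klDiv]
      rw [Finset.mul_sum]
      refine Finset.sum_congr rfl fun x _ => ?_
      rcases Nat.eq_zero_or_pos (k x) with h | h
      · simp [hlam, h]
      · have hPx : 0 < P x := lt_of_le_of_ne (hP0 x) (Ne.symm (hsupp x h.ne'))
        have hlx : (n : ℝ) * lam x = k x := by
          simp only [hlam]; field_simp
        rw [show P x / lam x = (lam x / P x)⁻¹ from (inv_div _ _).symm, Real.logb_inv,
          ← hlx]
        ring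
    rw [hsum]
    rw [Real.rpow_def_of_pos two_pos, Finset.mul_sum, Real.exp_sum]
    have hfac : ∀ x, Real.exp (Real.log 2 * ((k x : ℝ) * Real.logb 2 (P x / lam x)))
        = (P x / lam x) ^ k x := by
      intro x
      rcases Nat.eq_zero_or_pos (k x) with h | h
      · simp [h]
      · have hPx : 0 < P x := lt_of_le_of_ne (hP0 x) (Ne.symm (hsupp x h.ne'))
        have hlx : 0 < lam x := div_pos (by exact_mod_cast h) hn'
        have hr : 0 < P x / lam x := div_pos hPx hlx
        rw [Real.logb, show Real.log 2 * ((k x : ℝ) * (Real.log (P x / lam x) / Real.log 2))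
            = (k x : ℝ) * Real.log (P x / lam x) by
          field_simp, Real.exp_nat_mul, Real.exp_log hr]
    rw [Finset.prod_congr rfl fun x _ => hfac x]
    rw [Finset.prod_congr rfl fun x _ => div_pow (P x) (lam x) (k x),
      Finset.prod_div_distrib]
  rw [hprob, hD]
  constructor
  · -- lower bound
    have hrp : ((n : ℝ) + 1) ^ (-(Fintype.card X : ℝ))
        = (((n : ℝ) + 1) ^ Fintype.card X)⁻¹ := by
      rw [← Real.rpow_natCast ((n : ℝ) + 1) (Fintype.card X),
        ← Real.rpow_neg (by positivity)]
    have h2 : (((n : ℝ) + 1) ^ Fintype.card X)⁻¹ ≤ M * B := by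
      rw [inv_eq_one_div, div_le_iff₀ (by positivity : (0:ℝ) < ((n:ℝ)+1) ^ Fintype.card X)]
      calc (1 : ℝ) ≤ ((n : ℝ) + 1) ^ Fintype.card X * (M * B) := Tge
        _ = M * B * ((n : ℝ) + 1) ^ Fintype.card X := by ring
    rw [hrp]
    calc (((n : ℝ) + 1) ^ Fintype.card X)⁻¹ * (A / B)
        ≤ (M * B) * (A / B) :=
          mul_le_mul_of_nonneg_right h2 (le_of_lt (div_pos hApos hBpos))
      _ = M * A := by field_simp
  · -- upper bound
    have : M * A = (M * B) * (A / B) := by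
      field_simp
    rw [this]
    calc (M * B) * (A / B) ≤ 1 * (A / B) :=
        mul_le_mul_of_nonneg_right Tle (le_of_lt (div_pos hApos hBpos))
      _ = A / B := one_mul _

theorem type_class_probability_bounds
    {X : Type} [Fintype X] [DecidableEq X] {n : ℕ} (hn : 0 < n)
    (P : X → ℝ) (hP0 : ∀ x, 0 ≤ P x) (hP1 : ∑ x, P x = 1)
    (k : X → ℕ) (hk : ∑ x, k x = n)
    (hsupp : ∀ x, k x ≠ 0 → P x ≠ 0) :
    letI lam : X → ℝ := fun x => (k x : ℝ) / n
    letI prob : ℝ := ∑ xs : Fin n → X,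
      (if ∀ x, (Finset.univ.filter fun i => xs i = x).card = k x
        then ∏ i, P (xs i) else 0)
    ((n : ℝ) + 1) ^ (-(Fintype.card X : ℝ)) * (2 : ℝ) ^ (-(n : ℝ) * klDiv lam P)
        ≤ prob ∧
    prob ≤ (2 : ℝ) ^ (-(n : ℝ) * klDiv lam P) := by
  exact bounds_aux hn P hP0 hP1 k hk hsupp
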